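/- For every even integer n ≥ 16, there exists a cubic graph of order n with coalition number equal to 9. -/

import Mathlib

/-- `S` dominates the vertex `v`: `v ∈ S` or some vertex of `S` is adjacent to `v`. -/
def SimpleGraph.DominatesVert {V : Type*} (G : SimpleGraph V) (S : Finset V) (v : V) : Prop :=
  v ∈ S ∨ ∃ u ∈ S, G.Adj u v

/-- `S` is a dominating set of `G`. -/
def SimpleGraph.IsDominatingSet {V : Type*} (G : SimpleGraph V) (S : Finset V) : Prop :=
  ∀ v, G.DominatesVert S v

/-- A coalition partition of `G`: a partition of the vertex set into nonempty parts,
each of which is either a dominating singleton, or a non-dominating set forming a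
coalition (dominating union) with another non-dominating part. -/
def SimpleGraph.IsCoalitionPartition {V : Type*} [Fintype V] [DecidableEq V]
    (G : SimpleGraph V) (P : Finset (Finset V)) : Prop :=
  (∀ A ∈ P, A.Nonempty) ∧
  (∀ A ∈ P, ∀ B ∈ P, A ≠ B → Disjoint A B) ∧
  (∀ v : V, ∃ A ∈ P, v ∈ A) ∧
  ∀ A ∈ P,
    (∃ v, A = {v} ∧ G.IsDominatingSet A) ∨
    (¬ G.IsDominatingSet A ∧
      ∃ B ∈ P, B ≠ A ∧ ¬ G.IsDominatingSet B ∧ G.IsDominatingSet (A ∪ B))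

/-- The coalition number of `G`: the maximum number of parts in a coalition partition. -/
noncomputable def SimpleGraph.coalitionNumber {V : Type*} [Fintype V] [DecidableEq V]
    (G : SimpleGraph V) : ℕ :=
  sSup {k | ∃ P : Finset (Finset V), G.IsCoalitionPartition P ∧ P.card = k}

/-!
In a graph of maximum degree 3 on at least five vertices no vertex dominates, so every part `A`
of a coalition partition misses some vertex `w` and has a partner. The parts meeting the closed
neighbourhood of `w` are disjoint, hence at most four, and form a vertex cover of the coalition
graph that avoids `A`. Now take a graph without isolated vertices in which every vertex is avoided
by a vertex cover of size at most 4. Fix one such cover `C` and send every vertex outside `C` to a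
neighbour in `C`, with image `K`, `k = #K`. The cover avoiding `t ∈ K` contains the fibre of `t` and
meets every other fibre or its base point, so each fibre has at most `5 - k` elements and at most
`k (5 - k) ≤ 6` vertices lie outside `C`. With ten vertices this is tight, which pins down the cover
avoiding each `t ∈ K` as the fibre of `t` plus `K \ {t}`; these sets have no common element, so the
edge at a vertex of `C \ K` is not covered by all of them.

Nine parts are realised by disjoint copies of `K₄`, plus a `K₃,₃` when `n ≡ 2 mod 4`: for `c < 3`
the big part `c` misses only block `c`, and the two vertices of block `c` lying in no big part are
its singleton partners.
-/

open Finset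

theorem Finset.card_image_fiber {V ι : Type*} [Fintype V] [DecidableEq V] [DecidableEq ι]
    (φ : V → ι) :
    #(univ.image fun v => ({u | φ u = φ v} : Finset V)) = #(univ.image φ) := by
  rw [show (fun v => ({u | φ u = φ v} : Finset V)) = (fun i => ({u | φ u = i} : Finset V)) ∘ φ
    from rfl, ← image_image]
  refine card_image_of_injOn fun i hi j _ h => ?_
  obtain ⟨v, -, rfl⟩ := mem_image.mp hi
  simpa using (Finset.ext_iff.mp h v).mp (by simp)

namespace SimpleGraph

section VertexCover

variable {α : Type*} [DecidableEq α] {H : SimpleGraph α} {C T : Finset α} {f : α → α} {t : α}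

theorem filter_eq_subset_of_isVertexCover (s : Finset α) (hf : ∀ u, H.Adj u (f u))
    (hT : H.IsVertexCover T) (ht : t ∉ T) : {u ∈ s | f u = t} ⊆ T := fun u hu =>
  (hT ((mem_filter.mp hu).2 ▸ (hf u).symm)).resolve_left ht

variable [Fintype α]

theorem image_compl_subset_of_isVertexCover (hC : H.IsVertexCover C)
    (hf : ∀ u, H.Adj u (f u)) : Cᶜ.image f ⊆ C := by
  simp only [subset_iff, mem_image, mem_compl]
  rintro _ ⟨u, hu, rfl⟩
  exact (hC (hf u)).resolve_left hu

theorem card_filter_add_sum_le_card (hC : H.IsVertexCover C) (hf : ∀ u, H.Adj u (f u))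
    (hT : H.IsVertexCover T) (ht : t ∉ T) :
    #{u ∈ Cᶜ | f u = t} +
      ∑ s ∈ (Cᶜ.image f).erase t, (if s ∈ T then 1 else #{u ∈ Cᶜ | f u = s}) ≤ #T := by
  set piece : α → Finset α := fun s => if s ∈ T then {s} else {u ∈ Cᶜ | f u = s}
  -- `piece s` lies in the fibre over `s` of `x ↦ if x ∈ C then x else f x`
  have hpiece : ∀ s ∈ Cᶜ.image f, ∀ y ∈ piece s, (y ∈ C → y = s) ∧ (y ∉ C → f y = s) := by
    intro s hs y hy
    simp only [piece] at hy
    split_ifs at hy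
    · rw [mem_singleton.mp hy]
      exact ⟨fun _ => rfl, fun h => absurd (image_compl_subset_of_isVertexCover hC hf hs) h⟩
    · rw [mem_filter, mem_compl] at hy
      exact ⟨fun h => absurd h hy.1, fun _ => hy.2⟩
  have hdisj : Set.PairwiseDisjoint ↑((Cᶜ.image f).erase t) piece := by
    intro s hs s' hs' hne
    refine Finset.disjoint_left.mpr fun y hy hy' => hne ?_
    have h := hpiece s (mem_of_mem_erase hs) y hy
    have h' := hpiece s' (mem_of_mem_erase hs') y hy'
    by_cases hyC : y ∈ C
    · exact (h.1 hyC).symm.trans (h'.1 hyC)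
    · exact (h.2 hyC).symm.trans (h'.2 hyC)
  have hdisj' : Disjoint {u ∈ Cᶜ | f u = t} (((Cᶜ.image f).erase t).biUnion piece) := by
    refine Finset.disjoint_left.mpr fun y hy hy' => ?_
    obtain ⟨s, hs, hys⟩ := mem_biUnion.mp hy'
    rw [mem_filter, mem_compl] at hy
    exact ne_of_mem_erase hs ((hpiece s (mem_of_mem_erase hs) y hys).2 hy.1 ▸ hy.2)
  have hsub : {u ∈ Cᶜ | f u = t} ∪ ((Cᶜ.image f).erase t).biUnion piece ⊆ T := by
    refine union_subset (filter_eq_subset_of_isVertexCover _ hf hT ht) fun y hy => ?_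
    obtain ⟨s, -, hys⟩ := mem_biUnion.mp hy
    simp only [piece] at hys
    split_ifs at hys with hsT
    · exact mem_singleton.mp hys ▸ hsT
    · exact (hT (hf y)).resolve_right ((mem_filter.mp hys).2 ▸ hsT)
  calc _ = #({u ∈ Cᶜ | f u = t} ∪ ((Cᶜ.image f).erase t).biUnion piece) := by
        rw [card_union_of_disjoint hdisj', card_biUnion hdisj]
        congr 1
        refine sum_congr rfl fun s _ => ?_
        simp only [piece]
        split_ifs <;> simp
    _ ≤ #T := card_le_card hsub

theorem card_filter_add_card_erase_le (hC : H.IsVertexCover C) (hf : ∀ u, H.Adj u (f u))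
    (hT : H.IsVertexCover T) (ht : t ∉ T) :
    #{u ∈ Cᶜ | f u = t} + #((Cᶜ.image f).erase t) ≤ #T := by
  refine le_trans (add_le_add le_rfl ?_) (card_filter_add_sum_le_card hC hf hT ht)
  rw [card_eq_sum_ones]
  refine sum_le_sum fun s hs => ?_
  obtain ⟨u, hu, rfl⟩ := mem_image.mp (mem_of_mem_erase hs)
  split_ifs
  · rfl
  · exact card_pos.mpr ⟨u, mem_filter.mpr ⟨hu, rfl⟩⟩

theorem card_filter_add_card_erase_lt (hC : H.IsVertexCover C) (hf : ∀ u, H.Adj u (f u))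
    (hT : H.IsVertexCover T) (ht : t ∉ T)
    (h2 : ∀ s ∈ (Cᶜ.image f).erase t, 2 ≤ #{u ∈ Cᶜ | f u = s})
    (hne : T ≠ {u ∈ Cᶜ | f u = t} ∪ (Cᶜ.image f).erase t) :
    #{u ∈ Cᶜ | f u = t} + #((Cᶜ.image f).erase t) < #T := by
  by_cases hsub : (Cᶜ.image f).erase t ⊆ T
  · have hdisj : Disjoint {u ∈ Cᶜ | f u = t} ((Cᶜ.image f).erase t) :=
      disjoint_of_subset_left (filter_subset _ _) <| disjoint_of_subset_right
        ((erase_subset _ _).trans (image_compl_subset_of_isVertexCover hC hf)) disjoint_compl_left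
    rw [← card_union_of_disjoint hdisj]
    exact card_lt_card <| ssubset_of_subset_of_ne
      (union_subset (filter_eq_subset_of_isVertexCover _ hf hT ht) hsub) hne.symm
  · obtain ⟨s, hs, hsT⟩ := not_subset.mp hsub
    refine lt_of_lt_of_le (add_lt_add_of_le_of_lt le_rfl ?_)
      (card_filter_add_sum_le_card hC hf hT ht)
    rw [card_eq_sum_ones]
    refine sum_lt_sum (fun s' hs' => ?_) ⟨s, hs, by rw [if_neg hsT]; exact h2 s hs⟩
    split_ifs
    · rfl
    · exact le_trans (by norm_num) (h2 s' hs')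

theorem card_filter_add_card_image_eq_five {T : α → Finset α} (hC : H.IsVertexCover C)
    (hC4 : #C ≤ 4) (hf : ∀ u, H.Adj u (f u)) (hT : ∀ a, H.IsVertexCover (T a))
    (haT : ∀ a, a ∉ T a) (hT4 : ∀ a, #(T a) ≤ 4) (hU : 6 ≤ #Cᶜ) :
    #Cᶜ = 6 ∧ 2 ≤ #(Cᶜ.image f) ∧ #(Cᶜ.image f) ≤ 3 ∧
      ∀ t ∈ Cᶜ.image f, #{u ∈ Cᶜ | f u = t} + #(Cᶜ.image f) = 5 := by
  rw [card_eq_sum_card_image f] at hU ⊢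
  set K := Cᶜ.image f
  have hle : ∀ t ∈ K, #{u ∈ Cᶜ | f u = t} + #K ≤ 5 := fun t ht => by
    have := card_filter_add_card_erase_le hC hf (hT t) (haT t)
    rw [card_erase_of_mem ht] at this
    have := hT4 t
    have := card_pos.mpr ⟨t, ht⟩
    omega
  -- the fibres have total size at least 6 but each at most `5 - #K`
  have hsum : ∑ s ∈ K, #{u ∈ Cᶜ | f u = s} ≤ #K * (5 - #K) :=
    sum_le_card_nsmul _ _ _ fun s hs => by have := hle s hs; omega
  have hk : #K = 2 ∨ #K = 3 := by
    have hK4 : #K ≤ 4 := (card_le_card (image_compl_subset_of_isVertexCover hC hf)).trans hC4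
    interval_cases h : #K <;> omega
  refine ⟨by rcases hk with hk | hk <;> rw [hk] at hsum <;> omega, by omega, by omega,
    fun t ht => ?_⟩
  have hrest : ∑ s ∈ K.erase t, #{u ∈ Cᶜ | f u = s} ≤ #(K.erase t) * (5 - #K) :=
    sum_le_card_nsmul _ _ _ fun s hs => by have := hle s (mem_of_mem_erase hs); omega
  rw [← add_sum_erase _ _ ht] at hU
  rw [card_erase_of_mem ht] at hrest
  have := hle t ht
  rcases hk with hk | hk <;> rw [hk] at hrest this ⊢ <;> omega

theorem card_le_nine_of_forall_exists_isVertexCover (hiso : ∀ a, ∃ b, H.Adj a b)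
    (hcov : ∀ a, ∃ T : Finset α, H.IsVertexCover T ∧ a ∉ T ∧ #T ≤ 4) :
    Fintype.card α ≤ 9 := by
  by_contra! h10
  choose T hT haT hT4 using hcov
  choose f hf using hiso
  obtain ⟨a⟩ : Nonempty α := Fintype.card_pos_iff.mp (by omega)
  have hC := hT a
  have hC4 := hT4 a
  generalize T a = C at hC hC4
  have hU : 6 ≤ #Cᶜ := by rw [card_compl]; omega
  obtain ⟨hU6, hK2, hK3, heq⟩ := card_filter_add_card_image_eq_five hC hC4 hf hT haT hT4 hU
  set K := Cᶜ.image f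
  have hrigid : ∀ t ∈ K, T t = {u ∈ Cᶜ | f u = t} ∪ K.erase t := fun t ht => by
    by_contra hne
    have := card_filter_add_card_erase_lt hC hf (hT t) (haT t)
      (fun s hs => by have := heq s (mem_of_mem_erase hs); omega) hne
    rw [card_erase_of_mem ht] at this
    have := heq t ht
    have := hT4 t
    omega
  obtain ⟨c, hcC, hcK⟩ : ∃ c ∈ C, c ∉ K := by
    refine not_subset.mp fun h => ?_
    have := card_le_card h
    have := card_compl C
    omega
  -- `c` is in no `T t`, so its neighbour `f c` is in all of them, which is impossible
  have hx : ∀ t ∈ K, f c ∈ {u ∈ Cᶜ | f u = t} ∪ K.erase t := fun t ht => by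
    rw [← hrigid t ht]
    refine (hT t (hf c)).resolve_left fun hc => ?_
    rw [hrigid t ht, mem_coe, mem_union, mem_filter, mem_compl] at hc
    exact hc.elim (fun h => h.1 hcC) (fun h => hcK (mem_of_mem_erase h))
  by_cases hxK : f c ∈ K
  · simpa [image_compl_subset_of_isVertexCover hC hf hxK] using hx _ hxK
  · obtain ⟨t₁, ht₁, t₂, ht₂, h12⟩ := one_lt_card.mp (show 1 < #K by omega)
    have h₁ := hx t₁ ht₁
    have h₂ := hx t₂ ht₂
    simp only [mem_union, mem_filter, mem_erase, hxK, and_false, or_false] at h₁ h₂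
    exact h12 (h₁.2.symm.trans h₂.2)

end VertexCover

variable {V : Type*} (G : SimpleGraph V)

theorem DominatesVert.of_mem {S : Finset V} {u v : V} (hu : u ∈ S) (h : u = v ∨ G.Adj u v) :
    G.DominatesVert S v :=
  h.elim (fun h => Or.inl (h ▸ hu)) fun h => Or.inr ⟨u, hu, h⟩

variable [DecidableEq V]

theorem dominatesVert_union {A B : Finset V} {v : V} :
    G.DominatesVert (A ∪ B) v ↔ G.DominatesVert A v ∨ G.DominatesVert B v := by
  simp only [DominatesVert, mem_union, or_and_right, exists_or]
  grind

def coalitionGraph (P : Finset (Finset V)) : SimpleGraph P where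
  Adj A B := A ≠ B ∧ G.IsDominatingSet (A.1 ∪ B.1)
  symm := ⟨fun A B h => ⟨h.1.symm, union_comm A.1 B.1 ▸ h.2⟩⟩
  loopless := ⟨fun _ h => h.1 rfl⟩

variable [Fintype V]

theorem isCoalitionPartition_image_fiber {ι : Type*} [DecidableEq ι] (φ : V → ι)
    (hnd : ∀ v, ¬ G.IsDominatingSet {u | φ u = φ v})
    (hpartner : ∀ v, ∃ w, φ w ≠ φ v ∧
      G.IsDominatingSet (({u | φ u = φ v} : Finset V) ∪ ({u | φ u = φ w} : Finset V))) :
    G.IsCoalitionPartition (univ.image fun v => ({u | φ u = φ v} : Finset V)) := by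
  simp only [IsCoalitionPartition, mem_image, mem_univ, true_and, forall_exists_index,
    forall_apply_eq_imp_iff]
  refine ⟨fun v => ⟨v, by simp⟩, fun v w hvw => disjoint_filter.mpr fun u _ h h' => hvw ?_,
    fun v => ⟨_, ⟨v, rfl⟩, by simp⟩, fun v => Or.inr ⟨hnd v, ?_⟩⟩
  · simp only [← h, ← h']
  · obtain ⟨w, hwv, hdom⟩ := hpartner v
    refine ⟨_, ⟨w, rfl⟩, fun h => hwv ?_, hnd w, hdom⟩
    simpa using (Finset.ext_iff.mp h w).mp (by simp)

variable [DecidableRel G.Adj]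

theorem card_le_degree_add_one_of_forall_dominatesVert {Q : Finset (Finset V)}
    (hdis : ∀ A ∈ Q, ∀ B ∈ Q, A ≠ B → Disjoint A B) {w : V}
    (hQ : ∀ A ∈ Q, G.DominatesVert A w) : #Q ≤ G.degree w + 1 := by
  refine (card_le_card_of_forall_subsingleton (fun A u => u ∈ A)
    (t := insert w (G.neighborFinset w))
    (fun A hA => ?_) fun u _ A hA B hB => ?_).trans (card_insert_le _ _)
  · rcases hQ A hA with h | ⟨u, hu, huw⟩
    · exact ⟨w, mem_insert_self _ _, h⟩
    · exact ⟨u, mem_insert_of_mem ((mem_neighborFinset _ _ _).mpr huw.symm), hu⟩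
  · by_contra hAB
    exact Finset.disjoint_left.mp (hdis A hA.1 B hB.1 hAB) hA.2 hB.2

theorem card_le_degree_add_one_of_isDominatingSet_singleton {v : V}
    (h : G.IsDominatingSet {v}) : Fintype.card V ≤ G.degree v + 1 := by
  refine (card_le_card fun u _ => ?_).trans (card_insert_le v (G.neighborFinset v))
  rcases h u with h | ⟨w, hw, hwu⟩
  · exact mem_insert.mpr (Or.inl (mem_singleton.mp h))
  · exact mem_insert_of_mem ((mem_neighborFinset _ _ _).mpr (mem_singleton.mp hw ▸ hwu))

theorem IsCoalitionPartition.card_le_nine {P : Finset (Finset V)} (hP : G.IsCoalitionPartition P)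
    (hdeg : ∀ v, G.degree v ≤ 3) (hcard : 5 ≤ Fintype.card V) : #P ≤ 9 := by
  obtain ⟨-, hdis, -, hco⟩ := hP
  have hco' : ∀ A ∈ P, ¬ G.IsDominatingSet A ∧
      ∃ B ∈ P, B ≠ A ∧ G.IsDominatingSet (A ∪ B) := fun A hA => by
    rcases hco A hA with ⟨v, rfl, hv⟩ | ⟨hA, B, hB, hBA, -, hAB⟩
    · have := card_le_degree_add_one_of_isDominatingSet_singleton G hv
      have := hdeg v
      omega
    · exact ⟨hA, B, hB, hBA, hAB⟩
  rw [← Fintype.card_coe]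
  refine card_le_nine_of_forall_exists_isVertexCover (H := G.coalitionGraph P)
    (fun A => ?_) fun A => ?_
  · obtain ⟨B, hB, hBA, hAB⟩ := (hco' A A.2).2
    exact ⟨⟨B, hB⟩, fun h => hBA (congrArg Subtype.val h).symm, hAB⟩
  · obtain ⟨w, hw⟩ := not_forall.mp (hco' A A.2).1
    classical
    refine ⟨univ.filter fun X : P => G.DominatesVert X.1 w, fun X Y hXY => ?_,
      by simpa using hw, ?_⟩
    · simpa using (G.dominatesVert_union).mp (hXY.2 w)
    · rw [← card_map (Function.Embedding.subtype _)]
      refine (card_le_degree_add_one_of_forall_dominatesVert G (w := w) (fun A hA B hB => ?_)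
        fun A hA => ?_).trans (by have := hdeg w; omega)
      · obtain ⟨⟨A, hA'⟩, -, rfl⟩ := mem_map.mp hA
        obtain ⟨⟨B, hB'⟩, -, rfl⟩ := mem_map.mp hB
        exact hdis A hA' B hB'
      · obtain ⟨X, hX, rfl⟩ := mem_map.mp hA
        simpa using hX

theorem coalitionNumber_eq_nine (hdeg : ∀ v, G.degree v ≤ 3) (hcard : 5 ≤ Fintype.card V)
    {P : Finset (Finset V)} (hP : G.IsCoalitionPartition P) (h9 : #P = 9) :
    G.coalitionNumber = 9 :=
  IsGreatest.csSup_eq ⟨⟨P, hP, h9⟩, fun _ ⟨_, hQ, hQk⟩ => hQk ▸ hQ.card_le_nine G hdeg hcard⟩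

end SimpleGraph

section Construction

variable {m n : ℕ}

/-- `m` disjoint copies of `K₄` on `[0, 4m)`, and on `[4m, n)` a complete bipartite graph
whose sides are the even and the odd numbers. -/
def k4K33Graph (m n : ℕ) : SimpleGraph (Fin n) where
  Adj u v := (u : ℕ) ≠ v ∧
    ((u : ℕ) < 4 * m ∧ (v : ℕ) < 4 * m ∧ (u : ℕ) / 4 = v / 4 ∨
      4 * m ≤ (u : ℕ) ∧ 4 * m ≤ (v : ℕ) ∧ (u : ℕ) % 2 ≠ v % 2)
  symm := ⟨fun _ _ h => by omega⟩
  loopless := ⟨fun _ h => by omega⟩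

instance (m n : ℕ) : DecidableRel (k4K33Graph m n).Adj := fun u v => by
  unfold k4K33Graph; infer_instance

theorem k4K33Graph_adj {u v : Fin n} : (k4K33Graph m n).Adj u v ↔ (u : ℕ) ≠ v ∧
    ((u : ℕ) < 4 * m ∧ (v : ℕ) < 4 * m ∧ (u : ℕ) / 4 = v / 4 ∨
      4 * m ≤ (u : ℕ) ∧ 4 * m ≤ (v : ℕ) ∧ (u : ℕ) % 2 ≠ v % 2) :=
  Iff.rfl

theorem k4K33Graph_isRegularOfDegree (hn : n = 4 * m ∨ n = 4 * m + 6) :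
    (k4K33Graph m n).IsRegularOfDegree 3 := by
  intro v
  have hv := v.isLt
  rw [← SimpleGraph.card_neighborFinset_eq_degree, card_eq_three]
  by_cases hvm : (v : ℕ) < 4 * m
  · refine ⟨⟨4 * (v / 4) + (v + 1) % 4, by omega⟩, ⟨4 * (v / 4) + (v + 2) % 4, by omega⟩,
      ⟨4 * (v / 4) + (v + 3) % 4, by omega⟩, by simp only [ne_eq, Fin.mk.injEq]; omega,
      by simp only [ne_eq, Fin.mk.injEq]; omega, by simp only [ne_eq, Fin.mk.injEq]; omega, ?_⟩
    ext u
    have := u.isLt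
    simp only [SimpleGraph.mem_neighborFinset, k4K33Graph_adj, mem_insert, mem_singleton,
      Fin.ext_iff]
    omega
  · refine ⟨⟨4 * m + (v - 4 * m + 1) % 6, by omega⟩, ⟨4 * m + (v - 4 * m + 3) % 6, by omega⟩,
      ⟨4 * m + (v - 4 * m + 5) % 6, by omega⟩, by simp only [ne_eq, Fin.mk.injEq]; omega,
      by simp only [ne_eq, Fin.mk.injEq]; omega, by simp only [ne_eq, Fin.mk.injEq]; omega, ?_⟩
    ext u
    have := u.isLt
    simp only [SimpleGraph.mem_neighborFinset, k4K33Graph_adj, mem_insert, mem_singleton,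
      Fin.ext_iff]
    omega

/-- The part of a vertex: `0, 1, 2` are the big parts, and the vertices `0, 5, 10` (labels
`3, 4, 5`) and `3, 7, 11` (labels `6, 7, 8`) are singletons. -/
def k4K33Label (m v : ℕ) : ℕ :=
  if v < 12 ∧ v % 5 = 0 then 3 + v / 5
  else if v < 12 ∧ v % 4 = 3 then 6 + v / 4
  else if v < 4 * m ∧ v % 4 < 3 then v % 4
  else if v < 4 * m then 0
  else (v - 4 * m) / 2

def k4K33LabelRep (ℓ : ℕ) : ℕ :=
  if ℓ = 0 then 4 else if ℓ < 3 then ℓ else if ℓ < 6 then 5 * (ℓ - 3) else 4 * (ℓ - 6) + 3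

theorem k4K33LabelRep_lt {ℓ : ℕ} (hℓ : ℓ < 9) : k4K33LabelRep ℓ < 12 := by
  unfold k4K33LabelRep
  split_ifs <;> omega

theorem k4K33Label_labelRep {ℓ : ℕ} (hm : 3 ≤ m) (hℓ : ℓ < 9) :
    k4K33Label m (k4K33LabelRep ℓ) = ℓ := by
  unfold k4K33Label k4K33LabelRep
  split_ifs <;> grind

theorem k4K33Label_lt (hn : n = 4 * m ∨ n = 4 * m + 6) (v : Fin n) :
    k4K33Label m v < 9 := by
  have := v.isLt
  unfold k4K33Label
  split_ifs <;> omega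

theorem not_isDominatingSet_k4K33Label (hm : 3 ≤ m) (hn : n = 4 * m ∨ n = 4 * m + 6)
    {ℓ : ℕ} (hℓ : ℓ < 9) :
    ¬ (k4K33Graph m n).IsDominatingSet {u | k4K33Label m u = ℓ} := by
  -- the big part `ℓ` misses the block `ℓ`, a singleton misses the next block
  obtain ⟨x, hx⟩ : ∃ x : Fin n, (x : ℕ) = if ℓ < 3 then 4 * ℓ + 3 else 4 * ((ℓ + 1) % 3) :=
    ⟨⟨if ℓ < 3 then 4 * ℓ + 3 else 4 * ((ℓ + 1) % 3), by split_ifs <;> omega⟩, rfl⟩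
  intro h
  rcases h x with hx' | ⟨u, hu, hux⟩
  · have := (mem_filter.mp hx').2
    unfold k4K33Label at this
    split_ifs at this hx <;> omega
  · have := (mem_filter.mp hu).2
    rw [k4K33Graph_adj] at hux
    unfold k4K33Label at this
    split_ifs at this hx <;> omega

theorem isDominatingSet_k4K33Label_union (hm : 3 ≤ m) (hn : n = 4 * m ∨ n = 4 * m + 6)
    {c ℓ : ℕ} (hc : c < 3) (hℓ : ℓ = c + 3 ∨ ℓ = c + 6) :
    (k4K33Graph m n).IsDominatingSet
      (({u | k4K33Label m u = c} : Finset (Fin n)) ∪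
        ({u | k4K33Label m u = ℓ} : Finset (Fin n))) := by
  intro v
  have hv := v.isLt
  by_cases hvm : (v : ℕ) < 4 * m
  · by_cases hb : (v : ℕ) / 4 = c
    · have hrep := k4K33LabelRep_lt (ℓ := ℓ) (by omega)
      refine SimpleGraph.DominatesVert.of_mem _ (u := ⟨k4K33LabelRep ℓ, by omega⟩)
        (mem_union_right _ (mem_filter.mpr ⟨mem_univ _, k4K33Label_labelRep hm (by omega)⟩)) ?_
      rw [k4K33Graph_adj, Fin.ext_iff]
      dsimp only
      unfold k4K33LabelRep
      split_ifs <;> omega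
    · refine SimpleGraph.DominatesVert.of_mem _ (u := ⟨4 * (v / 4) + c, by omega⟩)
        (mem_union_left _ (mem_filter.mpr ⟨mem_univ _, ?_⟩)) ?_
      · simp only [k4K33Label]; split_ifs <;> omega
      · rw [k4K33Graph_adj, Fin.ext_iff]; dsimp only; omega
  · refine SimpleGraph.DominatesVert.of_mem _ (u := ⟨4 * m + 2 * c + 1 - v % 2, by omega⟩)
      (mem_union_left _ (mem_filter.mpr ⟨mem_univ _, ?_⟩)) ?_
    · simp only [k4K33Label]; split_ifs <;> omega
    · rw [k4K33Graph_adj, Fin.ext_iff]; dsimp only; omega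

theorem exists_isCoalitionPartition_k4K33Graph (hm : 3 ≤ m)
    (hn : n = 4 * m ∨ n = 4 * m + 6) :
    ∃ P, (k4K33Graph m n).IsCoalitionPartition P ∧ #P = 9 := by
  have hrep : ∀ ℓ < 9, k4K33LabelRep ℓ < n := fun ℓ hℓ => by
    have := k4K33LabelRep_lt hℓ; omega
  refine ⟨_, (k4K33Graph m n).isCoalitionPartition_image_fiber (fun v => k4K33Label m v)
    (fun v => not_isDominatingSet_k4K33Label hm hn (k4K33Label_lt hn v)) fun v => ?_, ?_⟩
  · -- a big part `c` is paired with the singleton `c + 3`, a singleton `ℓ` with `ℓ % 3`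
    have hv := k4K33Label_lt hn v
    by_cases hc : k4K33Label m v < 3
    · refine ⟨⟨_, hrep (k4K33Label m v + 3) (by omega)⟩, ?_, ?_⟩
      · rw [k4K33Label_labelRep hm (by omega)]; omega
      · rw [k4K33Label_labelRep hm (by omega)]
        exact isDominatingSet_k4K33Label_union hm hn hc (Or.inl rfl)
    · refine ⟨⟨_, hrep (k4K33Label m v % 3) (by omega)⟩, ?_, ?_⟩
      · rw [k4K33Label_labelRep hm (by omega)]; omega
      · rw [k4K33Label_labelRep hm (by omega), union_comm]
        exact isDominatingSet_k4K33Label_union hm hn (Nat.mod_lt _ (by norm_num)) (by omega)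
  · rw [card_image_fiber, show univ.image (fun v : Fin n => k4K33Label m v) = range 9 from ?_,
      card_range]
    ext ℓ
    simp only [mem_image, mem_univ, true_and, mem_range]
    exact ⟨fun ⟨v, hv⟩ => hv ▸ k4K33Label_lt hn v,
      fun hℓ => ⟨⟨_, hrep ℓ hℓ⟩, k4K33Label_labelRep hm hℓ⟩⟩

end Construction

/-- For every even `n ≥ 16` there is a cubic graph of order `n` with coalition number 9. -/
theorem exists_cubic_coalition_nine_of_even (n : ℕ) (hn : 16 ≤ n) (hev : Even n) :
    ∃ G : SimpleGraph (Fin n), ∃ _ : DecidableRel G.Adj, G.IsRegularOfDegree 3 ∧ G.coalitionNumber = 9 := by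
  obtain ⟨m, hm, hnm⟩ : ∃ m, 3 ≤ m ∧ (n = 4 * m ∨ n = 4 * m + 6) := by
    have : n % 4 = 0 ∨ n % 4 = 2 := by obtain ⟨k, rfl⟩ := hev; omega
    rcases this with h | h
    · exact ⟨n / 4, by omega, Or.inl (by omega)⟩
    · exact ⟨n / 4 - 1, by omega, Or.inr (by omega)⟩
  have hreg := k4K33Graph_isRegularOfDegree hnm
  obtain ⟨P, hP, h9⟩ := exists_isCoalitionPartition_k4K33Graph hm hnm
  exact ⟨k4K33Graph m n, inferInstance, hreg,
    (k4K33Graph m n).coalitionNumber_eq_nine (fun v => (hreg v).le)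
      (by rw [Fintype.card_fin]; omega) hP h9⟩
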